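/- Let U : ℝ^d → ℝ be C² with U(r) ≥ U_min for all r, let b : ℝ^d → ℝ^{d'} satisfy |b(r)| ≤ B for all r, and let A : ℝ^d → ℝ^{d'×d'} be C¹ with symmetric values satisfying vᵀA(r)v ≥ c|v|² for all r, v, where c > 0. Let ε > 0 and let (r_ε, x_ε) be a C² solution on [0,t_f] of the XLMD system r̈_ε = −∇U(r_ε) − ∇_r Q(r_ε, x_ε), ε·ẍ_ε = b(r_ε) − A(r_ε)x_ε, with initial extended energy E₀ = ½|ṙ_ε(0)|² + (ε/2)|ẋ_ε(0)|² + U(r_ε(0)) + Q(r_ε(0), x_ε(0)). Then for all t ∈ [0,t_f]: ½|ṙ_ε(t)|² ≤ E₀ − U_min + B²/(2c), (ε/2)|ẋ_ε(t)|² ≤ E₀ − U_min + B²/(2c), and |x_ε(t)| ≤ (B + √(B² + 2c(E₀ − U_min)))/c. -/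

import Mathlib

/-! Along a solution the extended energy `½|ṙ|² + (ε/2)|ẋ|² + U(r) + Q(r,x)` is conserved: since `A`
is symmetric, its time derivative is `⟪ṙ, r̈ + ∇U(r) + ∇_r Q(r,x)⟫ + ⟪εẍ + A(r)x − b(r), ẋ⟫`, which
vanishes by the equations of motion. Coercivity of `A` and `|b| ≤ B` give
`Q(r,x) ≥ (c/2)|x|² − B|x| ≥ −B²/(2c)`, which bounds each kinetic term, and solving the quadratic
inequality `(c/2)|x|² − B|x| ≤ E₀ − U_min` bounds `|x|`. -/

open scoped RealInnerProductSpace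
open Set

noncomputable section

attribute [local instance] Matrix.normedAddCommGroup Matrix.normedSpace

/-- The interaction energy `Q(r,x) = ½ xᵀA(r)x − b(r)ᵀx`. -/
noncomputable def Qfun {d n : ℕ}
    (A : EuclideanSpace ℝ (Fin d) → Matrix (Fin n) (Fin n) ℝ)
    (b : EuclideanSpace ℝ (Fin d) → EuclideanSpace ℝ (Fin n))
    (r : EuclideanSpace ℝ (Fin d)) (x : EuclideanSpace ℝ (Fin n)) : ℝ :=
  (1/2) * ⟪x, (Matrix.toEuclideanLin (A r)) x⟫ - ⟪b r, x⟫

/-- The gradient in `r` of `Q(r,x) = ½ xᵀA(r)x − b(r)ᵀx`; its `k`-th component is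
`½ xᵀ(∂A/∂r_k)(r)x − (∂b/∂r_k)(r)ᵀx`. -/
noncomputable def gradQ {d n : ℕ}
    (A : EuclideanSpace ℝ (Fin d) → Matrix (Fin n) (Fin n) ℝ)
    (b : EuclideanSpace ℝ (Fin d) → EuclideanSpace ℝ (Fin n))
    (r : EuclideanSpace ℝ (Fin d)) (x : EuclideanSpace ℝ (Fin n)) :
    EuclideanSpace ℝ (Fin d) :=
  (EuclideanSpace.equiv (Fin d) ℝ).symm fun k =>
    (1/2) * ⟪x, (Matrix.toEuclideanLin (fderiv ℝ A r (EuclideanSpace.single k 1))) x⟫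
      - ⟪fderiv ℝ b r (EuclideanSpace.single k 1), x⟫

section

variable {ι : Type*} [Fintype ι] [DecidableEq ι]

open Matrix in
theorem HasDerivAt.toEuclideanLin_apply
    {M : ℝ → Matrix ι ι ℝ} {M' : Matrix ι ι ℝ} {x : ℝ → EuclideanSpace ℝ ι}
    {x' : EuclideanSpace ℝ ι} {t : ℝ} (hM : HasDerivAt M M' t) (hx : HasDerivAt x x' t) :
    HasDerivAt (fun s => toEuclideanLin (M s) (x s))
      (toEuclideanLin M' (x t) + toEuclideanLin (M t) x') t := by
  let L : Matrix ι ι ℝ →L[ℝ] EuclideanSpace ℝ ι →L[ℝ] EuclideanSpace ℝ ι :=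
    LinearMap.toContinuousLinearMap (toEuclideanCLM (n := ι) (𝕜 := ℝ)).toAlgEquiv.toLinearMap
  exact (L.hasFDerivAt.comp_hasDerivAt t hM).clm_apply hx

theorem HasDerivAt.inner_toEuclideanLin_self
    {M : ℝ → Matrix ι ι ℝ} {M' : Matrix ι ι ℝ} {x : ℝ → EuclideanSpace ℝ ι}
    {x' : EuclideanSpace ℝ ι} {t : ℝ} (hsymm : (M t).IsSymm)
    (hM : HasDerivAt M M' t) (hx : HasDerivAt x x' t) :
    HasDerivAt (fun s => ⟪x s, Matrix.toEuclideanLin (M s) (x s)⟫)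
      (⟪x t, Matrix.toEuclideanLin M' (x t)⟫
        + 2 * ⟪Matrix.toEuclideanLin (M t) (x t), x'⟫) t := by
  have hself : (Matrix.toEuclideanLin (M t)).IsSymmetric :=
    Matrix.isSymmetric_toEuclideanLin_iff.mpr (Matrix.isHermitian_iff_isSymm.mpr hsymm)
  refine (hx.inner ℝ (hM.toEuclideanLin_apply hx)).congr_deriv ?_
  rw [inner_add_right, ← hself, real_inner_comm x']
  ring

end

def xlmdEnergy {d n : ℕ} (ε : ℝ) (U : EuclideanSpace ℝ (Fin d) → ℝ)
    (A : EuclideanSpace ℝ (Fin d) → Matrix (Fin n) (Fin n) ℝ)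
    (b : EuclideanSpace ℝ (Fin d) → EuclideanSpace ℝ (Fin n))
    (r : ℝ → EuclideanSpace ℝ (Fin d)) (x : ℝ → EuclideanSpace ℝ (Fin n)) (t : ℝ) : ℝ :=
  (1/2) * ‖deriv r t‖ ^ 2 + (ε/2) * ‖deriv x t‖ ^ 2 + U (r t) + Qfun A b (r t) (x t)

section

variable {d n : ℕ} {A : EuclideanSpace ℝ (Fin d) → Matrix (Fin n) (Fin n) ℝ}
    {b : EuclideanSpace ℝ (Fin d) → EuclideanSpace ℝ (Fin n)}

theorem inner_gradQ (r : EuclideanSpace ℝ (Fin d)) (x : EuclideanSpace ℝ (Fin n))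
    (v : EuclideanSpace ℝ (Fin d)) :
    ⟪gradQ A b r x, v⟫ =
      (1/2) * ⟪x, (Matrix.toEuclideanLin (fderiv ℝ A r v)) x⟫ - ⟪fderiv ℝ b r v, x⟫ := by
  let φ : EuclideanSpace ℝ (Fin d) →ₗ[ℝ] ℝ :=
    { toFun := fun v =>
        (1/2) * ⟪x, Matrix.toEuclideanLin (fderiv ℝ A r v) x⟫ - ⟪fderiv ℝ b r v, x⟫
      map_add' := fun v w => by
        simp only [map_add, LinearMap.add_apply, inner_add_left, inner_add_right]
        ring
      map_smul' := fun a v => by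
        simp only [map_smul, LinearMap.smul_apply, real_inner_smul_left, real_inner_smul_right,
          RingHom.id_apply, smul_eq_mul]
        ring }
  change innerₛₗ ℝ (gradQ A b r x) v = φ v
  refine LinearMap.congr_fun ((EuclideanSpace.basisFun (Fin d) ℝ).toBasis.ext fun k => ?_) v
  simp [gradQ, EuclideanSpace.inner_single_right, φ]

theorem HasDerivAt.Qfun {r : ℝ → EuclideanSpace ℝ (Fin d)} {x : ℝ → EuclideanSpace ℝ (Fin n)}
    {r' : EuclideanSpace ℝ (Fin d)} {x' : EuclideanSpace ℝ (Fin n)} {t : ℝ}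
    (hsymm : (A (r t)).IsSymm) (hA : DifferentiableAt ℝ A (r t))
    (hb : DifferentiableAt ℝ b (r t)) (hr : HasDerivAt r r' t) (hx : HasDerivAt x x' t) :
    HasDerivAt (fun s => Qfun A b (r s) (x s))
      (⟪gradQ A b (r t) (x t), r'⟫
        + ⟪Matrix.toEuclideanLin (A (r t)) (x t) - b (r t), x'⟫) t := by
  have hAr : HasDerivAt (fun s => A (r s)) (fderiv ℝ A (r t) r') t :=
    hA.hasFDerivAt.comp_hasDerivAt t hr
  have hbr : HasDerivAt (fun s => b (r s)) (fderiv ℝ b (r t) r') t :=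
    hb.hasFDerivAt.comp_hasDerivAt t hr
  refine ((HasDerivAt.inner_toEuclideanLin_self hsymm hAr hx).const_mul (1/2)).sub
    (hbr.inner ℝ hx) |>.congr_deriv ?_
  rw [inner_gradQ, inner_sub_left]
  ring

variable {ε : ℝ} {U : EuclideanSpace ℝ (Fin d) → ℝ}
    {r : ℝ → EuclideanSpace ℝ (Fin d)} {x : ℝ → EuclideanSpace ℝ (Fin n)}

theorem hasDerivAt_xlmdEnergy {t : ℝ} (hU : DifferentiableAt ℝ U (r t))
    (hsymm : (A (r t)).IsSymm) (hA : DifferentiableAt ℝ A (r t))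
    (hb : DifferentiableAt ℝ b (r t)) (hr : DifferentiableAt ℝ r t)
    (hr' : DifferentiableAt ℝ (deriv r) t) (hx : DifferentiableAt ℝ x t)
    (hx' : DifferentiableAt ℝ (deriv x) t) :
    HasDerivAt (xlmdEnergy ε U A b r x)
      (⟪deriv r t, deriv (deriv r) t - (-gradient U (r t) - gradQ A b (r t) (x t))⟫
        + ⟪ε • deriv (deriv x) t - (b (r t) - Matrix.toEuclideanLin (A (r t)) (x t)),
            deriv x t⟫) t := by
  have hUr : HasDerivAt (fun s => U (r s)) ⟪gradient U (r t), deriv r t⟫ t :=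
    (hasGradientAt_iff_hasFDerivAt.mp hU.hasGradientAt).comp_hasDerivAt t hr.hasDerivAt
  have hQ := HasDerivAt.Qfun hsymm hA hb hr.hasDerivAt hx.hasDerivAt
  refine ((((hr'.hasDerivAt.norm_sq.const_mul (1/2)).add
    (hx'.hasDerivAt.norm_sq.const_mul (ε/2))).add hUr).add hQ).congr_deriv ?_
  simp only [inner_sub_right, inner_neg_right, inner_sub_left, real_inner_smul_left]
  rw [real_inner_comm (gradient U (r t)), real_inner_comm (gradQ A b (r t) (x t)),
    real_inner_comm (deriv (deriv x) t)]
  ring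

theorem xlmdEnergy_eq_of_mem_Icc {t₀ t₁ : ℝ} (hU : Differentiable ℝ U)
    (hAsymm : ∀ r, (A r).IsSymm) (hA : Differentiable ℝ A) (hb : Differentiable ℝ b)
    (hr : ContDiff ℝ 2 r) (hx : ContDiff ℝ 2 x)
    (hode_r : ∀ t ∈ Icc t₀ t₁,
      deriv (deriv r) t = -gradient U (r t) - gradQ A b (r t) (x t))
    (hode_x : ∀ t ∈ Icc t₀ t₁,
      ε • deriv (deriv x) t = b (r t) - Matrix.toEuclideanLin (A (r t)) (x t)) :
    ∀ t ∈ Icc t₀ t₁, xlmdEnergy ε U A b r x t = xlmdEnergy ε U A b r x t₀ := by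
  have hE (t : ℝ) := hasDerivAt_xlmdEnergy (ε := ε) (hU (r t)) (hAsymm (r t)) (hA (r t))
    (hb (r t)) (hr.differentiable two_ne_zero t) (hr.differentiable_deriv_two t)
    (hx.differentiable two_ne_zero t) (hx.differentiable_deriv_two t)
  refine constant_of_has_deriv_right_zero
    (continuous_iff_continuousAt.mpr fun t => (hE t).continuousAt).continuousOn
    fun t ht => (hE t).hasDerivWithinAt.congr_deriv ?_
  rw [hode_r t (Ico_subset_Icc_self ht), hode_x t (Ico_subset_Icc_self ht)]
  simp only [sub_self, inner_zero_right, inner_zero_left, add_zero]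

theorem half_mul_sq_sub_le_Qfun {r : EuclideanSpace ℝ (Fin d)} {y : EuclideanSpace ℝ (Fin n)}
    {B c : ℝ} (hb : ‖b r‖ ≤ B) (hA : c * ‖y‖ ^ 2 ≤ ⟪y, Matrix.toEuclideanLin (A r) y⟫) :
    c / 2 * ‖y‖ ^ 2 - B * ‖y‖ ≤ Qfun A b r y := by
  have hby : ⟪b r, y⟫ ≤ B * ‖y‖ :=
    (real_inner_le_norm _ _).trans (mul_le_mul_of_nonneg_right hb (norm_nonneg y))
  rw [Qfun]
  linarith

end

theorem neg_sq_div_le_half_mul_sq_sub {B c : ℝ} (hc : 0 < c) (y : ℝ) :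
    -(B ^ 2 / (2 * c)) ≤ c / 2 * y ^ 2 - B * y := by
  have hsq : c / 2 * y ^ 2 - B * y + B ^ 2 / (2 * c) = (c * y - B) ^ 2 / (2 * c) := by
    field_simp
    ring
  have : 0 ≤ (c * y - B) ^ 2 / (2 * c) := by positivity
  linarith

theorem le_add_sqrt_div_of_half_mul_sq_sub_le {B c y K : ℝ} (hc : 0 < c)
    (h : c / 2 * y ^ 2 - B * y ≤ K) : y ≤ (B + √(B ^ 2 + 2 * c * K)) / c := by
  have hsq : (c * y - B) ^ 2 ≤ B ^ 2 + 2 * c * K := by nlinarith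
  rw [le_div_iff₀ hc]
  linarith [le_abs_self (c * y - B), Real.abs_le_sqrt hsq]

theorem xlmd_apriori_bounds_from_energy_general
    (d n : ℕ)
    (tf : ℝ)
    (U : EuclideanSpace ℝ (Fin d) → ℝ) (hU : ContDiff ℝ 2 U)
    (Umin : ℝ) (hUbd : ∀ r, Umin ≤ U r)
    (b : EuclideanSpace ℝ (Fin d) → EuclideanSpace ℝ (Fin n))
    (B : ℝ) (hbbd : ∀ r, ‖b r‖ ≤ B)
    (A : EuclideanSpace ℝ (Fin d) → Matrix (Fin n) (Fin n) ℝ)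
    (hA : ContDiff ℝ 1 A) (hb : ContDiff ℝ 1 b)
    (hAsymm : ∀ r, (A r).IsSymm)
    (c : ℝ) (hc : 0 < c)
    (hApos : ∀ (r : EuclideanSpace ℝ (Fin d)) (v : EuclideanSpace ℝ (Fin n)),
      c * ‖v‖ ^ 2 ≤ ⟪v, (Matrix.toEuclideanLin (A r)) v⟫)
    (ε : ℝ) (hε : 0 < ε)
    -- (rε, xε) is a C² solution of the XLMD system on [0, t_f]
    (re : ℝ → EuclideanSpace ℝ (Fin d)) (xe : ℝ → EuclideanSpace ℝ (Fin n))
    (hre : ContDiff ℝ 2 re) (hxe : ContDiff ℝ 2 xe)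
    (hode1 : ∀ t ∈ Icc (0:ℝ) tf,
      deriv (deriv re) t = -gradient U (re t) - gradQ A b (re t) (xe t))
    (hode2 : ∀ t ∈ Icc (0:ℝ) tf,
      ε • deriv (deriv xe) t
        = b (re t) - (Matrix.toEuclideanLin (A (re t))) (xe t))
    -- the initial extended energy
    (E₀ : ℝ)
    (hE₀ : E₀ = (1/2) * ‖deriv re 0‖ ^ 2 + (ε/2) * ‖deriv xe 0‖ ^ 2
        + U (re 0) + Qfun A b (re 0) (xe 0)) :
    ∀ t ∈ Icc (0:ℝ) tf,
      (1/2) * ‖deriv re t‖ ^ 2 ≤ E₀ - Umin + B ^ 2 / (2 * c) ∧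
      (ε/2) * ‖deriv xe t‖ ^ 2 ≤ E₀ - Umin + B ^ 2 / (2 * c) ∧
      ‖xe t‖ ≤ (B + Real.sqrt (B ^ 2 + 2 * c * (E₀ - Umin))) / c := by
  intro t ht
  have hE : (1/2) * ‖deriv re t‖ ^ 2 + (ε/2) * ‖deriv xe t‖ ^ 2
      + U (re t) + Qfun A b (re t) (xe t) = E₀ :=
    hE₀ ▸ xlmdEnergy_eq_of_mem_Icc (hU.differentiable two_ne_zero) hAsymm
      (hA.differentiable one_ne_zero) (hb.differentiable one_ne_zero) hre hxe hode1 hode2 t ht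
  have hQ := half_mul_sq_sub_le_Qfun (hbbd (re t)) (hApos (re t) (xe t))
  have hQ' := neg_sq_div_le_half_mul_sq_sub (B := B) hc ‖xe t‖
  have hkin_r : 0 ≤ (1/2) * ‖deriv re t‖ ^ 2 := by positivity
  have hkin_x : 0 ≤ (ε/2) * ‖deriv xe t‖ ^ 2 := by positivity
  have hUt := hUbd (re t)
  refine ⟨by linarith, by linarith, le_add_sqrt_div_of_half_mul_sq_sub_le hc ?_⟩
  linarith

theorem xlmd_apriori_bounds_from_energy
    (d n : ℕ) (hd : 1 ≤ d) (hn : 1 ≤ n)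
    (tf : ℝ) (htf : 0 < tf)
    (U : EuclideanSpace ℝ (Fin d) → ℝ) (hU : ContDiff ℝ 2 U)
    (Umin : ℝ) (hUbd : ∀ r, Umin ≤ U r)
    (b : EuclideanSpace ℝ (Fin d) → EuclideanSpace ℝ (Fin n))
    (B : ℝ) (hbbd : ∀ r, ‖b r‖ ≤ B)
    (A : EuclideanSpace ℝ (Fin d) → Matrix (Fin n) (Fin n) ℝ)
    (hA : ContDiff ℝ 1 A) (hb : ContDiff ℝ 1 b)
    (hAsymm : ∀ r, (A r).IsSymm)
    (c : ℝ) (hc : 0 < c)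
    (hApos : ∀ (r : EuclideanSpace ℝ (Fin d)) (v : EuclideanSpace ℝ (Fin n)),
      c * ‖v‖ ^ 2 ≤ ⟪v, (Matrix.toEuclideanLin (A r)) v⟫)
    (ε : ℝ) (hε : 0 < ε)
    -- (rε, xε) is a C² solution of the XLMD system on [0, t_f]
    (re : ℝ → EuclideanSpace ℝ (Fin d)) (xe : ℝ → EuclideanSpace ℝ (Fin n))
    (hre : ContDiff ℝ 2 re) (hxe : ContDiff ℝ 2 xe)
    (hode1 : ∀ t ∈ Icc (0:ℝ) tf,
      deriv (deriv re) t = -gradient U (re t) - gradQ A b (re t) (xe t))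
    (hode2 : ∀ t ∈ Icc (0:ℝ) tf,
      ε • deriv (deriv xe) t
        = b (re t) - (Matrix.toEuclideanLin (A (re t))) (xe t))
    -- the initial extended energy
    (E₀ : ℝ)
    (hE₀ : E₀ = (1/2) * ‖deriv re 0‖ ^ 2 + (ε/2) * ‖deriv xe 0‖ ^ 2
        + U (re 0) + Qfun A b (re 0) (xe 0)) :
    ∀ t ∈ Icc (0:ℝ) tf,
      (1/2) * ‖deriv re t‖ ^ 2 ≤ E₀ - Umin + B ^ 2 / (2 * c) ∧
      (ε/2) * ‖deriv xe t‖ ^ 2 ≤ E₀ - Umin + B ^ 2 / (2 * c) ∧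
      ‖xe t‖ ≤ (B + Real.sqrt (B ^ 2 + 2 * c * (E₀ - Umin))) / c :=
  xlmd_apriori_bounds_from_energy_general d n tf U hU Umin hUbd b B hbbd A hA hb hAsymm c hc hApos ε
    hε re xe hre hxe hode1 hode2 E₀ hE₀

end
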